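/- Let p(X) be a monic irreducible quadratic polynomial over F_q with root μ ∈ F_{q^2}, and fix a ∈ F_q. Then the syndrome G_{q+1-k} u^T of the word u = ((α_1+a)/p(α_1), ..., (α_q+a)/p(α_q), 0) ∈ F_q^{q+1} is, up to multiplication by the nonzero scalar -(μ - μ^q)^2, equal to (μ+a)·c_{q+1-k}(μ) + (μ+a)^q·c_{q+1-k}(μ^q). -/

import Mathlib

open Matrix Polynomial

/-- The column `c_m(t)` of the PRS generator matrix: `(1,t,...,t^{m-1})` for `t ∈ F`
(`some a`), and `(0,...,0,1)` for `t = ∞` (`none`). -/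
def PRScol (F : Type*) [Field F] (m : ℕ) : Option F → Fin m → F
  | some a => fun i => a ^ (i : ℕ)
  | none => fun i => if (i : ℕ) = m - 1 then 1 else 0

/-- The generator matrix `G_m` of the projective Reed-Solomon code, with columns
indexed by `Option F = F ∪ {∞}`. -/
def PRSmat (F : Type*) [Field F] (m : ℕ) : Matrix (Fin m) (Option F) F :=
  Matrix.of fun i t => PRScol F m t i

/-- The projective Reed-Solomon code `PRS(m)`: the row span of `G_m`. -/
def PRS (F : Type*) [Field F] (m : ℕ) : Submodule F (Option F → F) :=
  Submodule.span F (Set.range (PRSmat F m))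

/-- Error distance of a word `u` to a set of codewords `C`. -/
noncomputable def errDist {F ι : Type*} [DecidableEq F] [Fintype ι]
    (u : ι → F) (C : Set (ι → F)) : ℕ :=
  sInf {d | ∃ c ∈ C, hammingDist u c = d}

/-- Covering radius of a set of codewords `C`. -/
noncomputable def covRad {F ι : Type*} [DecidableEq F] [Fintype ι]
    (C : Set (ι → F)) : ℕ :=
  sSup {r | ∃ u : ι → F, errDist u C = r}

/-- Minimum distance of a code `C`. -/
noncomputable def minDist {F ι : Type*} [DecidableEq F] [Fintype ι]
    (C : Set (ι → F)) : ℕ :=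
  sInf {d | ∃ x ∈ C, ∃ y ∈ C, x ≠ y ∧ hammingDist x y = d}

/-- The matrix `g_m` associated to a 2×2 matrix `g = [[a,b],[c,d]]`: its `(i,j)` entry
(0-indexed) is the coefficient of `X^j` in `(a+bX)^{m-1-i} (c+dX)^i`. -/
noncomputable def glift (F : Type*) [Field F] (m : ℕ) (g : Matrix (Fin 2) (Fin 2) F) :
    Matrix (Fin m) (Fin m) F :=
  Matrix.of fun i j =>
    ((Polynomial.C (g 0 0) + Polynomial.C (g 0 1) * Polynomial.X) ^ (m - 1 - (i : ℕ)) *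
      (Polynomial.C (g 1 0) + Polynomial.C (g 1 1) * Polynomial.X) ^ (i : ℕ)).coeff (j : ℕ)

/-- The Möbius action of `g = [[a,b],[c,d]]` on `F ∪ {∞}`: `t ↦ (c+dt)/(a+bt)`. -/
def mobius {F : Type*} [Field F] [DecidableEq F]
    (g : Matrix (Fin 2) (Fin 2) F) : Option F → Option F
  | some x =>
      if g 0 0 + g 0 1 * x = 0 then none
      else some ((g 1 0 + g 1 1 * x) / (g 0 0 + g 0 1 * x))
  | none => if g 0 1 = 0 then none else some (g 1 1 / g 0 1)

/-- The point `N_m = (0,...,0,1,0)` (1 in position `m-1` of `1..m`, i.e. index `m-2`). -/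
def Nvec (F : Type*) [Field F] (m : ℕ) : Fin m → F :=
  fun i => if (i : ℕ) = m - 2 then 1 else 0


section SyndromeAux

open Finset

variable {F : Type*} [Field F] [Fintype F] [DecidableEq F]
variable {E : Type*} [Field E] [Algebra F E]

omit [DecidableEq F] in
lemma auxProdX : (∏ x : F, (X - C x)) = X ^ (Fintype.card F) - X := by
  have hq1 : 1 < Fintype.card F := Fintype.one_lt_card
  have hmon : (X ^ (Fintype.card F) - X : F[X]).Monic := by
    apply Polynomial.monic_X_pow_sub
    simpa using hq1
  have hcard : Multiset.card (X ^ (Fintype.card F) - X : F[X]).roots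
      = (X ^ (Fintype.card F) - X : F[X]).natDegree := by
    rw [FiniteField.roots_X_pow_card_sub_X, FiniteField.X_pow_card_sub_X_natDegree_eq F hq1]
    simp [Finset.card_univ]
  have h := prod_multiset_X_sub_C_of_monic_of_roots_card_eq hmon hcard
  rw [FiniteField.roots_X_pow_card_sub_X] at h
  rw [← h, Finset.prod_eq_multiset_prod]

omit [DecidableEq F] in
lemma auxProd (ν : E) : (∏ x : F, (ν - algebraMap F E x)) = ν ^ (Fintype.card F) - ν := by
  have := congrArg (Polynomial.aeval ν) (auxProdX (F := F))
  simpa [map_prod] using this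

lemma auxDerivX : Polynomial.derivative (∏ x : F, (X - C x))
    = ∑ x : F, ∏ y ∈ Finset.univ.erase x, (X - C y) := by
  rw [Finset.prod_eq_multiset_prod, Polynomial.derivative_prod]
  rw [Finset.sum_eq_multiset_sum]
  congr 1
  apply Multiset.map_congr rfl
  intro x _
  rw [Polynomial.derivative_X_sub_C, mul_one, Finset.prod_eq_multiset_prod, Finset.erase_val]

lemma auxDeriv (ν : E) :
    (∑ x : F, ∏ y ∈ Finset.univ.erase x, (ν - algebraMap F E y)) = -1 := by
  have hd := auxDerivX (F := F)
  rw [auxProdX] at hd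
  have hd2 : Polynomial.derivative (X ^ (Fintype.card F) - X : F[X]) = -1 := by
    simp [Polynomial.derivative_X_pow, FiniteField.cast_card_eq_zero]
  rw [hd2] at hd
  have := congrArg (Polynomial.aeval ν) hd
  simpa [map_prod] using this.symm

lemma keyA (ν : E) (hν : ∀ x : F, algebraMap F E x ≠ ν) :
    ∑ x : F, (algebraMap F E x - ν)⁻¹ = (ν ^ (Fintype.card F) - ν)⁻¹ := by
  have hne : ∀ x : F, ν - algebraMap F E x ≠ 0 := fun x h =>
    hν x (by rw [← sub_eq_zero]; rwa [← neg_sub, neg_eq_zero])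
  have hP : (∏ x : F, (ν - algebraMap F E x)) ≠ 0 := Finset.prod_ne_zero_iff.2 fun x _ => hne x
  have hPval := auxProd (F := F) ν
  calc ∑ x : F, (algebraMap F E x - ν)⁻¹
      = -∑ x : F, (ν - algebraMap F E x)⁻¹ := by
        rw [← Finset.sum_neg_distrib]
        exact Finset.sum_congr rfl fun x _ => by rw [← inv_neg, neg_sub]
    _ = -∑ x : F, (∏ y ∈ Finset.univ.erase x, (ν - algebraMap F E y))
          * (∏ y : F, (ν - algebraMap F E y))⁻¹ := by
        congr 1
        refine Finset.sum_congr rfl fun x _ => ?_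
        have hx : (∏ y : F, (ν - algebraMap F E y))
            = (ν - algebraMap F E x) * ∏ y ∈ Finset.univ.erase x, (ν - algebraMap F E y) :=
          (Finset.mul_prod_erase Finset.univ _ (Finset.mem_univ x)).symm
        have hErase : (∏ y ∈ Finset.univ.erase x, (ν - algebraMap F E y)) ≠ 0 :=
          Finset.prod_ne_zero_iff.2 fun y _ => hne y
        rw [hx, mul_inv, mul_comm ((ν - algebraMap F E x)⁻¹) _, ← mul_assoc,
          mul_inv_cancel₀ hErase, one_mul]
    _ = (ν ^ (Fintype.card F) - ν)⁻¹ := by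
        rw [← Finset.sum_mul, auxDeriv, hPval]
        ring

lemma keyB (j : ℕ) (hj : j < Fintype.card F - 1) (ν : E) (hν : ∀ x : F, algebraMap F E x ≠ ν) :
    ∑ x : F, (algebraMap F E x) ^ j * (algebraMap F E x - ν)⁻¹
      = ν ^ j * (ν ^ (Fintype.card F) - ν)⁻¹ := by
  have hne : ∀ x : F, algebraMap F E x - ν ≠ 0 := fun x => sub_ne_zero.2 (hν x)
  have split : ∀ x : F, (algebraMap F E x) ^ j * (algebraMap F E x - ν)⁻¹
      = (∑ i ∈ Finset.range j, (algebraMap F E x) ^ i * ν ^ (j - 1 - i))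
        + ν ^ j * (algebraMap F E x - ν)⁻¹ := by
    intro x
    have h1 := geom_sum₂_mul (algebraMap F E x) ν j
    have : (algebraMap F E x) ^ j
        = (∑ i ∈ Finset.range j, (algebraMap F E x) ^ i * ν ^ (j - 1 - i))
            * (algebraMap F E x - ν) + ν ^ j := by
      rw [h1]; ring
    rw [this, add_mul, mul_assoc, mul_inv_cancel₀ (hne x), mul_one]
  rw [Finset.sum_congr rfl fun x _ => split x, Finset.sum_add_distrib, ← Finset.mul_sum,
    keyA ν hν, Finset.sum_comm]
  have hz : ∀ i ∈ Finset.range j,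
      (∑ x : F, (algebraMap F E x) ^ i * ν ^ (j - 1 - i)) = 0 := by
    intro i hi
    rw [← Finset.sum_mul]
    have : (∑ x : F, (algebraMap F E x) ^ i) = 0 := by
      have h0 := FiniteField.sum_pow_lt_card_sub_one (K := F) i
        (lt_trans (Finset.mem_range.1 hi) hj)
      calc ∑ x : F, (algebraMap F E x) ^ i = algebraMap F E (∑ x : F, x ^ i) := by
            rw [map_sum]; exact Finset.sum_congr rfl fun x _ => (map_pow _ _ _).symm
        _ = 0 := by rw [h0, map_zero]
    rw [this, zero_mul]
  rw [Finset.sum_congr rfl hz, Finset.sum_const_zero, zero_add]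

lemma pfrac {E : Type*} [Field E] (u A B c : E) (h1 : u - A ≠ 0) (h2 : u - B ≠ 0)
    (h3 : A - B ≠ 0) :
    (u + c) / ((u - A) * (u - B))
      = (A + c) / (A - B) * (u - A)⁻¹ + (B + c) / (B - A) * (u - B)⁻¹ := by
  have h4 : B - A ≠ 0 := by intro h; exact h3 (by linear_combination -h)
  field_simp
  ring

end SyndromeAux

/-- Syndrome of the word $((α_1+a)/p(α_1),...,(α_q+a)/p(α_q),0)$ for a monic irreducible
quadratic $p$ with root $μ ∈ F_{q^2}$: multiplied by $-(μ-μ^q)^2$, it equals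
$(μ+a) c(μ) + (μ+a)^q c(μ^q)$. -/
theorem stmt17 (F : Type*) [Field F] [Fintype F] [DecidableEq F]
    (E : Type*) [Field E] [Fintype E] [Algebra F E]
    (hE : Fintype.card E = Fintype.card F ^ 2)
    (k : ℕ) (h2 : 2 ≤ k) (h3 : k ≤ Fintype.card F - 3)
    (p : Polynomial F) (hmonic : p.Monic) (hirr : Irreducible p) (hdeg : p.natDegree = 2)
    (μ : E) (hroot : Polynomial.aeval μ p = 0) (a : F) :
    (-(μ - μ ^ Fintype.card F) ^ 2) •
        (fun j : Fin (Fintype.card F + 1 - k) =>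
          algebraMap F E
            ((PRSmat F (Fintype.card F + 1 - k)).mulVec
              (fun t : Option F => match t with
                | none => 0
                | some x => (x + a) / Polynomial.eval x p) j)) =
      (fun j : Fin (Fintype.card F + 1 - k) =>
          (μ + algebraMap F E a) * μ ^ (j : ℕ)) +
        fun j : Fin (Fintype.card F + 1 - k) =>
          (μ + algebraMap F E a) ^ Fintype.card F * (μ ^ Fintype.card F) ^ (j : ℕ) := by
  set q := Fintype.card F with hq
  have hq5 : 5 ≤ q := by
    have := Fintype.one_lt_card (α := F)
    omega
  obtain ⟨n, hp0, hcard⟩ := FiniteField.card F (ringChar F)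
  haveI : Fact (ringChar F).Prime := ⟨hp0⟩
  haveI : CharP E (ringChar F) :=
    charP_of_injective_algebraMap (algebraMap F E).injective (ringChar F)
  set φ := iterateFrobenius E (ringChar F) n with hφdef
  have hφ : ∀ z : E, φ z = z ^ q := fun z => by
    rw [hφdef, iterateFrobenius_def, ← hcard, hq]
  have hfix : ∀ x : F, (algebraMap F E x) ^ q = algebraMap F E x := fun x => by
    rw [← map_pow, hq, FiniteField.pow_card]
  have haev : ∀ ν : E, aeval ν p = ∑ i ∈ Finset.range 3, algebraMap F E (p.coeff i) * ν ^ i := by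
    intro ν
    rw [aeval_eq_sum_range, hdeg]
    exact Finset.sum_congr rfl fun i _ => Algebra.smul_def _ _
  have hroot' : aeval (μ ^ q) p = 0 := by
    have h := congrArg φ hroot
    rw [map_zero, haev μ, map_sum] at h
    rw [haev (μ ^ q), ← h]
    refine Finset.sum_congr rfl fun i _ => ?_
    rw [_root_.map_mul, hφ, hφ, hfix, ← pow_mul, ← pow_mul, mul_comm i q]
  have p_no_root : ∀ x : F, p.eval x ≠ 0 := by
    intro x hx
    obtain ⟨g, hg⟩ := dvd_iff_isRoot.2 hx
    rcases hirr.isUnit_or_isUnit hg with h | h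
    · exact Polynomial.not_isUnit_X_sub_C x h
    · have hg0 : g ≠ 0 := by
        rintro rfl
        rw [mul_zero] at hg
        rw [hg] at hdeg
        simp at hdeg
      have := natDegree_mul (X_sub_C_ne_zero x) hg0
      rw [← hg, hdeg, natDegree_X_sub_C, natDegree_eq_zero_of_isUnit h] at this
      omega
  have hroot_notF : ∀ ν : E, aeval ν p = 0 → ∀ x : F, algebraMap F E x ≠ ν := by
    intro ν hν x hx
    apply p_no_root x
    apply (algebraMap F E).injective
    rw [map_zero, ← aeval_algebraMap_apply_eq_algebraMap_eval, hx, hν]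
  have hνμ : ∀ x : F, algebraMap F E x ≠ μ := hroot_notF μ hroot
  have hνμ' : ∀ x : F, algebraMap F E x ≠ μ ^ q := hroot_notF (μ ^ q) hroot'
  have hne : μ ≠ μ ^ q := by
    intro h
    have hp2 := auxProd (F := F) μ
    rw [← hq, ← h, sub_self] at hp2
    obtain ⟨x, -, hx⟩ := Finset.prod_eq_zero_iff.1 hp2
    exact hνμ x (by rw [← sub_eq_zero, ← neg_sub, hx, neg_zero])
  have hd : μ - μ ^ q ≠ 0 := sub_ne_zero.2 hne
  have hd' : μ ^ q - μ ≠ 0 := sub_ne_zero.2 (Ne.symm hne)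
  have hc2 : p.coeff 2 = 1 := by
    have := hmonic.coeff_natDegree
    rwa [hdeg] at this
  have e1 : algebraMap F E (p.coeff 0) + algebraMap F E (p.coeff 1) * μ + μ ^ 2 = 0 := by
    have h := hroot
    rw [haev μ] at h
    simp only [Finset.sum_range_succ, Finset.sum_range_zero, hc2, _root_.map_one, one_mul,
      pow_zero, mul_one, pow_one, zero_add] at h
    linear_combination h
  have e2 : algebraMap F E (p.coeff 0) + algebraMap F E (p.coeff 1) * μ ^ q
      + (μ ^ q) ^ 2 = 0 := by
    have h := hroot'
    rw [haev (μ ^ q)] at h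
    simp only [Finset.sum_range_succ, Finset.sum_range_zero, hc2, _root_.map_one, one_mul,
      pow_zero, mul_one, pow_one, zero_add] at h
    linear_combination h
  have hb : algebraMap F E (p.coeff 1) = -(μ + μ ^ q) := by
    have h0 : (algebraMap F E (p.coeff 1) + (μ + μ ^ q)) * (μ - μ ^ q) = 0 := by
      linear_combination e1 - e2
    rcases mul_eq_zero.1 h0 with h | h
    · exact eq_neg_of_add_eq_zero_left h
    · exact absurd h hd
  have hc : algebraMap F E (p.coeff 0) = μ * μ ^ q := by
    linear_combination e1 - μ * hb
  have hq2 : (μ ^ q) ^ q = μ := by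
    have h := FiniteField.pow_card μ
    rw [hE] at h
    rw [← pow_mul, ← sq]
    exact h
  have hfrob : (μ + algebraMap F E a) ^ q = μ ^ q + algebraMap F E a := by
    rw [← hφ, _root_.map_add, hφ, hφ, hfix]
  have peval : ∀ x : F, algebraMap F E (p.eval x)
      = (algebraMap F E x - μ) * (algebraMap F E x - μ ^ q) := by
    intro x
    have hev : p.eval x = ∑ i ∈ Finset.range 3, p.coeff i * x ^ i := by
      rw [eval_eq_sum_range, hdeg]
    rw [hev]
    simp only [Finset.sum_range_succ, Finset.sum_range_zero, hc2, zero_add, pow_zero,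
      mul_one, pow_one, _root_.map_add, _root_.map_mul, _root_.map_one, map_pow, one_mul]
    rw [hb, hc]
    ring
  have hxsub : ∀ x : F, algebraMap F E x - μ ≠ 0 := fun x => sub_ne_zero.2 (hνμ x)
  have hxsub' : ∀ x : F, algebraMap F E x - μ ^ q ≠ 0 := fun x => sub_ne_zero.2 (hνμ' x)
  funext j
  have hjlt : (j : ℕ) < q - 1 := by have := j.2; omega
  simp only [Pi.smul_apply, Pi.add_apply, smul_eq_mul]
  have hmv : (PRSmat F (q + 1 - k)).mulVec
      (fun t : Option F => match t with | none => 0 | some x => (x + a) / p.eval x) j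
      = ∑ x : F, x ^ (j : ℕ) * ((x + a) / p.eval x) := by
    rw [Matrix.mulVec, dotProduct, Fintype.sum_option]
    simp [PRSmat, PRScol]
  rw [hmv, map_sum]
  have hsummand : ∀ x : F, algebraMap F E (x ^ (j : ℕ) * ((x + a) / p.eval x))
      = (μ + algebraMap F E a) / (μ - μ ^ q)
          * ((algebraMap F E x) ^ (j : ℕ) * (algebraMap F E x - μ)⁻¹)
        + (μ ^ q + algebraMap F E a) / (μ ^ q - μ)
          * ((algebraMap F E x) ^ (j : ℕ) * (algebraMap F E x - μ ^ q)⁻¹) := by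
    intro x
    rw [_root_.map_mul, map_pow, map_div₀, _root_.map_add, peval,
      pfrac _ μ (μ ^ q) _ (hxsub x) (hxsub' x) hd]
    ring
  rw [Finset.sum_congr rfl fun x _ => hsummand x, Finset.sum_add_distrib,
    ← Finset.mul_sum, ← Finset.mul_sum, keyB (F := F) (j : ℕ) hjlt μ hνμ,
    keyB (F := F) (j : ℕ) hjlt (μ ^ q) hνμ', hq2, hfrob]
  set ν := μ ^ q with hν
  field_simp
  ring
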